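/- Let k be a nonnegative integer, n a positive integer with k ≤ n, 0 < p < 1 with q = 1 - p, and f = k/n. Then B_{n,k}(p)/b_{n,k}(p) ≥ L(n,k,p) ≥ 1, with equality in both places when k = 0 and strict inequalities when k ≥ 1. Moreover, if k < p·n then L(n,k,p) ≥ max{1, (1-f)·p/(p-f) - f·p·q·(1-f)/((p-f)³·n)}, and if k ≥ p·n then L(n,k,p) ≥ (1 + √(4·q·k + 1))/2. -/

import Mathlib

open Real

/-- Binomial probability `b_{n,k}(p)`. -/
noncomputable def b (n k : ℕ) (p : ℝ) : ℝ :=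
  (n.choose k : ℝ) * p ^ k * (1 - p) ^ (n - k)

/-- Lower tail probability `B_{n,k}(p)`. -/
noncomputable def B (n k : ℕ) (p : ℝ) : ℝ :=
  ∑ j ∈ Finset.range (k + 1), (n.choose j : ℝ) * p ^ j * (1 - p) ^ (n - j)

noncomputable def L (n k p : ℝ) : ℝ :=
  (k + 1 - p * n + Real.sqrt ((p * n - k + 1) ^ 2 + 4 * (1 - p) * k)) / 2

/-! Write `R = B_{n,k} / b_{n,k}`. The identity `(j + 1) q b_{j+1} = (n - j) p b_j` makes the
binomial weights log-concave, so `B_i / b_i` increases strictly in `i`, and telescoping the same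
identity gives `∑_{i<k} B_i = (k - np) B_k + (n - k) p b_k`. Hence, for `k ≥ 1`,
`b_k ∑_{i<k} B_i < B_k (B_k - b_k)`, i.e. `R² > (k + 1 - np) R + p (n - k)`, and `L` is the
positive root of this quadratic. The explicit bounds on `L` follow from
`L = 1 + (√(u² + 4qk) - u) / 2` with `u = pn - k + 1`: the map `u ↦ √(u² + c) - u` is
decreasing, and `√(u² + 4A) ≥ u + 2Au / (u² + A)` for `u > 0`; after clearing denominators,
the latter exceeds the bound for `k < pn` by a manifestly nonnegative polynomial. -/

open Finset

noncomputable def partialSumRatio (a : ℕ → ℝ) (i : ℕ) : ℝ :=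
  (∑ j ∈ range (i + 1), a j) / a i

section PartialSumRatio

variable {a : ℕ → ℝ}

theorem partialSumRatio_succ {i : ℕ} (hi : a i ≠ 0) (hi' : a (i + 1) ≠ 0) :
    partialSumRatio a (i + 1) = 1 + a i / a (i + 1) * partialSumRatio a i := by
  unfold partialSumRatio
  rw [sum_range_succ]
  field_simp
  ring

theorem partialSumRatio_pos {i : ℕ} (ha : ∀ j ≤ i, 0 < a j) : 0 < partialSumRatio a i :=
  div_pos (sum_pos (fun j hj => ha j (Nat.lt_succ_iff.mp (mem_range.mp hj)))
    nonempty_range_add_one) (ha i le_rfl)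

theorem strictMonoOn_partialSumRatio {N : ℕ} (ha : ∀ j ≤ N, 0 < a j)
    (hlc : ∀ j, j + 2 ≤ N → a j * a (j + 2) ≤ a (j + 1) ^ 2) :
    StrictMonoOn (partialSumRatio a) (Set.Iic N) := by
  refine strictMonoOn_Iic_of_lt_succ fun m hm => ?_
  rw [Order.succ_eq_add_one]
  induction m with
  | zero =>
    have h0 := ha 0 (Nat.zero_le N)
    have h1 := ha 1 hm
    rw [partialSumRatio_succ h0.ne' h1.ne']
    simp only [partialSumRatio, zero_add, sum_range_one, div_self h0.ne', mul_one]
    linarith [div_pos h0 h1]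
  | succ m ih =>
    have h0 := ha m (by omega)
    have h1 := ha (m + 1) (by omega)
    have h2 := ha (m + 2) hm
    have hρ : a m / a (m + 1) ≤ a (m + 1) / a (m + 2) := by
      rw [div_le_div_iff₀ h1 h2, ← sq]
      exact hlc m hm
    calc partialSumRatio a (m + 1) = 1 + a m / a (m + 1) * partialSumRatio a m :=
          partialSumRatio_succ h0.ne' h1.ne'
      _ < 1 + a m / a (m + 1) * partialSumRatio a (m + 1) := by
          gcongr
          exact ih (by omega)
      _ ≤ 1 + a (m + 1) / a (m + 2) * partialSumRatio a (m + 1) := by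
          gcongr
          exact (partialSumRatio_pos fun j hj => ha j (by omega)).le
      _ = partialSumRatio a (m + 2) := (partialSumRatio_succ h1.ne' h2.ne').symm

theorem sum_partialSums_eq (k : ℕ) :
    ∑ i ∈ range k, ∑ j ∈ range (i + 1), a j =
      ∑ j ∈ range (k + 1), ((k : ℝ) - j) * a j := by
  induction k with
  | zero => simp
  | succ k ih =>
    rw [sum_range_succ, ih, sum_range_succ _ (k + 1), ← sum_add_distrib]
    push_cast
    simp only [sub_self, zero_mul, add_zero]
    exact sum_congr rfl fun j _ => by ring

theorem sum_partialSums_lt_partialSumRatio_mul {N : ℕ} (hN : 0 < N)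
    (ha : ∀ j ≤ N, 0 < a j) (hlc : ∀ j, j + 2 ≤ N → a j * a (j + 2) ≤ a (j + 1) ^ 2) :
    ∑ i ∈ range N, ∑ j ∈ range (i + 1), a j < partialSumRatio a N * ∑ i ∈ range N, a i := by
  rw [mul_sum]
  refine sum_lt_sum_of_nonempty (nonempty_range_iff.mpr hN.ne') fun i hi => ?_
  have hi : i < N := mem_range.mp hi
  have hai := ha i hi.le
  calc ∑ j ∈ range (i + 1), a j = partialSumRatio a i * a i := by
        rw [partialSumRatio, div_mul_cancel₀ _ hai.ne']
    _ < partialSumRatio a N * a i := by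
        gcongr
        exact strictMonoOn_partialSumRatio ha hlc (Set.mem_Iic.mpr hi.le)
          (Set.mem_Iic.mpr le_rfl) hi

end PartialSumRatio

theorem add_sqrt_div_two_lt {c d x : ℝ} (hd : 0 ≤ d) (hx : 0 < x) (h : c * x + d < x ^ 2) :
    (c + √(c ^ 2 + 4 * d)) / 2 < x := by
  have hs := Real.sq_sqrt (show 0 ≤ c ^ 2 + 4 * d by positivity)
  have hcs : c ≤ √(c ^ 2 + 4 * d) := Real.le_sqrt_of_sq_le (by linarith)
  by_contra! hle
  have : (2 * x - c) ^ 2 ≤ √(c ^ 2 + 4 * d) ^ 2 := by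
    nlinarith [mul_nonneg (show 0 ≤ √(c ^ 2 + 4 * d) - (2 * x - c) by linarith)
      (show 0 ≤ √(c ^ 2 + 4 * d) + (2 * x - c) by linarith)]
  nlinarith

theorem antitone_sqrt_sq_add_sub {c : ℝ} (hc : 0 ≤ c) :
    Antitone fun u : ℝ => √(u ^ 2 + c) - u := by
  intro u v huv
  have hu : u ≤ √(u ^ 2 + c) := Real.le_sqrt_of_sq_le (by linarith)
  have hs := Real.sq_sqrt (show 0 ≤ u ^ 2 + c by positivity)
  have : √(v ^ 2 + c) ≤ √(u ^ 2 + c) + (v - u) := Real.sqrt_le_iff.mpr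
    ⟨by linarith [Real.sqrt_nonneg (u ^ 2 + c)],
      by nlinarith [mul_nonneg (sub_nonneg.2 huv) (sub_nonneg.2 hu)]⟩
  dsimp only
  linarith

theorem mul_div_sq_add_le_sqrt_sub {u A : ℝ} (hu : 0 < u) (hA : 0 ≤ A) :
    A * u / (u ^ 2 + A) ≤ (√(u ^ 2 + 4 * A) - u) / 2 := by
  have hW : 0 < u ^ 2 + A := by positivity
  suffices u + 2 * (A * u / (u ^ 2 + A)) ≤ √(u ^ 2 + 4 * A) by linarith
  refine Real.le_sqrt_of_sq_le (sub_nonneg.mp ?_)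
  have : u ^ 2 + 4 * A - (u + 2 * (A * u / (u ^ 2 + A))) ^ 2 = 4 * A ^ 3 / (u ^ 2 + A) ^ 2 := by
    field_simp
    ring
  rw [this]
  positivity

theorem lower_tail_bound_le_one_add {n k p : ℝ} (hk : 0 ≤ k) (hkp : k < p * n) (hp0 : 0 < p)
    (hp1 : p < 1) :
    (1 - k / n) * p / (p - k / n) - k / n * p * (1 - p) * (1 - k / n) / ((p - k / n) ^ 3 * n) ≤
      1 + (1 - p) * k * (p * n - k + 1) / ((p * n - k + 1) ^ 2 + (1 - p) * k) := by
  have hn : 0 < n := pos_of_mul_pos_right (hk.trans_lt hkp) hp0.le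
  obtain ⟨f, rfl⟩ : ∃ f, k = f * n := ⟨k / n, (div_mul_cancel₀ _ hn.ne').symm⟩
  rw [mul_div_cancel_right₀ _ hn.ne']
  have hf : 0 ≤ f := nonneg_of_mul_nonneg_left hk hn
  have hd : 0 < p - f := by nlinarith
  have hW : 0 < (p * n - f * n + 1) ^ 2 + (1 - p) * (f * n) := by nlinarith
  have hq : 0 < 1 - p := by linarith
  have hφ : (1 - f) * p / (p - f) - f * p * (1 - p) * (1 - f) / ((p - f) ^ 3 * n) =
      1 + f * (1 - p) * ((p - f) ^ 2 * n - p * (1 - f)) / ((p - f) ^ 3 * n) := by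
    field_simp
    ring
  rw [hφ, add_le_add_iff_left, div_le_div_iff₀ (by positivity) hW]
  have hrem :
      0 ≤ f * (1 - p) * (p * (1 - f) + n * ((1 - f) ^ 2 * p ^ 2 + (p - f) * f * (1 - p))) := by
    have : 0 < 1 - f := by linarith
    positivity
  linear_combination hrem

theorem L_eq_one_add (n k p : ℝ) :
    L n k p = 1 + (√((p * n - k + 1) ^ 2 + 4 * ((1 - p) * k)) - (p * n - k + 1)) / 2 := by
  unfold L
  ring_nf

theorem L_eq_root (n k p : ℝ) :
    L n k p = ((k + 1 - p * n) + √((k + 1 - p * n) ^ 2 + 4 * (p * (n - k)))) / 2 := by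
  unfold L
  congr 3
  ring

section L

variable {n k p : ℝ}

theorem one_le_L (h : 0 ≤ (1 - p) * k) : 1 ≤ L n k p := by
  have : p * n - k + 1 ≤ √((p * n - k + 1) ^ 2 + 4 * ((1 - p) * k)) :=
    Real.le_sqrt_of_sq_le (by linarith)
  rw [L_eq_one_add]
  linarith

theorem one_lt_L (h : 0 < (1 - p) * k) : 1 < L n k p := by
  have : p * n - k + 1 < √((p * n - k + 1) ^ 2 + 4 * ((1 - p) * k)) :=
    Real.lt_sqrt_of_sq_lt (by linarith)
  rw [L_eq_one_add]
  linarith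

theorem L_zero (hpn : 0 ≤ p * n) : L n 0 p = 1 := by
  rw [L_eq_one_add]
  simp only [mul_zero, add_zero, sub_zero]
  rw [Real.sqrt_sq (by linarith)]
  ring

theorem lower_tail_bound_le_L (hk : 0 ≤ k) (hkp : k < p * n) (hp0 : 0 < p) (hp1 : p < 1) :
    (1 - k / n) * p / (p - k / n) - k / n * p * (1 - p) * (1 - k / n) / ((p - k / n) ^ 3 * n) ≤
      L n k p := by
  have hA : 0 ≤ (1 - p) * k := mul_nonneg (by linarith) hk
  rw [L_eq_one_add]
  exact (lower_tail_bound_le_one_add hk hkp hp0 hp1).trans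
    (add_le_add_right (mul_div_sq_add_le_sqrt_sub (u := p * n - k + 1) (by linarith) hA) 1)

theorem one_add_sqrt_div_two_le_L (hA : 0 ≤ (1 - p) * k) (hpk : p * n ≤ k) :
    (1 + √(4 * (1 - p) * k + 1)) / 2 ≤ L n k p := by
  have := antitone_sqrt_sq_add_sub (mul_nonneg zero_le_four hA)
    (show p * n - k + 1 ≤ 1 by linarith)
  simp only [one_pow] at this
  rw [L_eq_one_add, mul_assoc, add_comm (4 * _) 1]
  linarith

end L

section Binomial

variable {n : ℕ} {p : ℝ}

theorem b_pos {k : ℕ} (hk : k ≤ n) (hp0 : 0 < p) (hp1 : p < 1) : 0 < b n k p := by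
  have : (0 : ℝ) < n.choose k := by exact_mod_cast Nat.choose_pos hk
  unfold b
  have : 0 < 1 - p := by linarith
  positivity

theorem B_eq_sum_b (k : ℕ) : B n k p = ∑ j ∈ range (k + 1), b n j p := rfl

theorem B_pos {k : ℕ} (hk : k ≤ n) (hp0 : 0 < p) (hp1 : p < 1) : 0 < B n k p :=
  sum_pos (fun _ hj => b_pos ((Nat.lt_succ_iff.mp (mem_range.mp hj)).trans hk) hp0 hp1)
    nonempty_range_add_one

theorem succ_mul_one_sub_mul_b_succ {j : ℕ} (hj : j < n) :
    ((j : ℝ) + 1) * (1 - p) * b n (j + 1) p = ((n : ℝ) - j) * p * b n j p := by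
  have hchoose : (n.choose (j + 1) : ℝ) * (j + 1) = n.choose j * ((n : ℝ) - j) := by
    rw [← Nat.cast_sub hj.le]
    exact_mod_cast Nat.choose_succ_right_eq n j
  have hnj : n - j = n - (j + 1) + 1 := by omega
  unfold b
  rw [hnj, pow_succ, pow_succ]
  linear_combination p ^ j * p * (1 - p) ^ (n - (j + 1)) * (1 - p) * hchoose

theorem b_mul_b_add_two_le_sq {j : ℕ} (hj : j + 2 ≤ n) (hp0 : 0 < p) (hp1 : p < 1) :
    b n j p * b n (j + 2) p ≤ b n (j + 1) p ^ 2 := by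
  have e₁ := succ_mul_one_sub_mul_b_succ (p := p) (show j < n by omega)
  have e₂ := succ_mul_one_sub_mul_b_succ (p := p) (show j + 1 < n by omega)
  have hnj : (j : ℝ) + 2 ≤ n := by exact_mod_cast hj
  have hq : 0 < 1 - p := by linarith
  have hpq : 0 < p * (1 - p) * (((n : ℝ) - j) * (j + 2)) := by
    have : (0 : ℝ) < (n - j) * (j + 2) := by nlinarith
    positivity
  have key : p * (1 - p) * (((n : ℝ) - j) * (j + 2)) * (b n j p * b n (j + 2) p) =
      p * (1 - p) * (((j : ℝ) + 1) * ((n : ℝ) - (j + 1))) * b n (j + 1) p ^ 2 := by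
    push_cast at e₂
    linear_combination (-((j : ℝ) + 2) * (1 - p) * b n (j + 2) p) * e₁ +
      ((j : ℝ) + 1) * (1 - p) * b n (j + 1) p * e₂
  refine le_of_mul_le_mul_left ?_ hpq
  rw [key]
  gcongr p * (1 - p) * ?_ * _
  nlinarith

theorem sum_range_succ_mul_sub_mul_b {k : ℕ} (hk : k ≤ n) :
    ∑ j ∈ range (k + 1), ((n : ℝ) * p - j) * b n j p = ((n : ℝ) - k) * p * b n k p := by
  induction k with
  | zero => simp
  | succ k ih =>
    rw [sum_range_succ, ih (by omega)]
    push_cast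
    linear_combination -succ_mul_one_sub_mul_b_succ (p := p) (show k < n by omega)

theorem sum_range_B_eq {k : ℕ} (hk : k ≤ n) :
    ∑ i ∈ range k, B n i p = ((k : ℝ) - n * p) * B n k p + ((n : ℝ) - k) * p * b n k p := by
  simp only [B_eq_sum_b, sum_partialSums_eq, ← sum_range_succ_mul_sub_mul_b hk, mul_sum,
    ← sum_add_distrib]
  exact sum_congr rfl fun j _ => by ring

theorem add_lt_sq_B_div_b {k : ℕ} (hk : 1 ≤ k) (hkn : k ≤ n) (hp0 : 0 < p) (hp1 : p < 1) :
    ((k : ℝ) + 1 - p * n) * (B n k p / b n k p) + p * (n - k) < (B n k p / b n k p) ^ 2 := by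
  have hb := b_pos hkn hp0 hp1
  have hsum := sum_partialSums_lt_partialSumRatio_mul (a := fun j => b n j p) hk
    (fun j hj => b_pos (hj.trans hkn) hp0 hp1)
    (fun j hj => b_mul_b_add_two_le_sq (hj.trans hkn) hp0 hp1)
  have hBb : ∑ i ∈ range k, b n i p = B n k p - b n k p := by
    rw [B_eq_sum_b, sum_range_succ, add_sub_cancel_right]
  change ∑ i ∈ range k, B n i p < B n k p / b n k p * ∑ i ∈ range k, b n i p at hsum
  rw [sum_range_B_eq hkn, hBb] at hsum
  set R := B n k p / b n k p
  have hB : B n k p = R * b n k p := (div_mul_cancel₀ _ hb.ne').symm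
  rw [hB] at hsum
  nlinarith

theorem L_lt_B_div_b {k : ℕ} (hk : 1 ≤ k) (hkn : k ≤ n) (hp0 : 0 < p) (hp1 : p < 1) :
    L n k p < B n k p / b n k p := by
  have hnk : (0 : ℝ) ≤ n - k := sub_nonneg.mpr (by exact_mod_cast hkn)
  rw [L_eq_root]
  exact add_sqrt_div_two_lt (mul_nonneg hp0.le hnk)
    (div_pos (B_pos hkn hp0 hp1) (b_pos hkn hp0 hp1)) (add_lt_sq_B_div_b hk hkn hp0 hp1)

end Binomial

theorem binomial_ratio_lower_bound_general
    (k : ℕ) (n : ℕ) (hkn : k ≤ n) (p : ℝ) (hp0 : 0 < p) (hp1 : p < 1) :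
    (L n k p ≤ B n k p / b n k p ∧ 1 ≤ L n k p) ∧
    (k = 0 → B n k p / b n k p = L n k p ∧ L n k p = 1) ∧
    (1 ≤ k → L n k p < B n k p / b n k p ∧ 1 < L n k p) ∧
    ((k : ℝ) < p * n →
      max 1 ((1 - (k : ℝ) / n) * p / (p - (k : ℝ) / n) -
          ((k : ℝ) / n) * p * (1 - p) * (1 - (k : ℝ) / n) / ((p - (k : ℝ) / n) ^ 3 * n))
        ≤ L n k p) ∧
    (p * n ≤ (k : ℝ) → (1 + Real.sqrt (4 * (1 - p) * k + 1)) / 2 ≤ L n k p) := by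
  have hq : 0 < 1 - p := by linarith
  have hA : 0 ≤ (1 - p) * k := by positivity
  have hzero : k = 0 → B n k p / b n k p = L n k p ∧ L n k p = 1 := by
    rintro rfl
    have hL := L_zero (n := n) (by positivity)
    rw [Nat.cast_zero, hL, B_eq_sum_b, zero_add, sum_range_one, div_self (b_pos hkn hp0 hp1).ne']
    exact ⟨rfl, rfl⟩
  have hpos : 1 ≤ k → L n k p < B n k p / b n k p ∧ 1 < L n k p := fun hk =>
    ⟨L_lt_B_div_b hk hkn hp0 hp1, one_lt_L (mul_pos hq (by exact_mod_cast hk))⟩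
  refine ⟨?_, hzero, hpos,
    fun hkp => max_le (one_le_L hA) (lower_tail_bound_le_L (by positivity) hkp hp0 hp1),
    one_add_sqrt_div_two_le_L hA⟩
  rcases k.eq_zero_or_pos with rfl | hk
  · exact ⟨(hzero rfl).1.ge, (hzero rfl).2.ge⟩
  · exact ⟨(hpos hk).1.le, one_le_L hA⟩

theorem binomial_ratio_lower_bound
    (k : ℕ) (n : ℕ) (hn : 0 < n) (hkn : k ≤ n) (p : ℝ) (hp0 : 0 < p) (hp1 : p < 1) :
    (L n k p ≤ B n k p / b n k p ∧ 1 ≤ L n k p) ∧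
    (k = 0 → B n k p / b n k p = L n k p ∧ L n k p = 1) ∧
    (1 ≤ k → L n k p < B n k p / b n k p ∧ 1 < L n k p) ∧
    ((k : ℝ) < p * n →
      max 1 ((1 - (k : ℝ) / n) * p / (p - (k : ℝ) / n) -
          ((k : ℝ) / n) * p * (1 - p) * (1 - (k : ℝ) / n) / ((p - (k : ℝ) / n) ^ 3 * n))
        ≤ L n k p) ∧
    (p * n ≤ (k : ℝ) → (1 + Real.sqrt (4 * (1 - p) * k + 1)) / 2 ≤ L n k p) :=
  binomial_ratio_lower_bound_general k n hkn p hp0 hp1
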